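/- Fix Δx > 0, Δt > 0, λ ∈ ℝ and an integer M ≥ 1. Let u : ℤ × ℤ → ℝ be a grid function with u(m + M, n) = u(m, n) for all (m,n) (spatial M-periodicity), and suppose u satisfies the MC₈(λ) scheme at every point: D_m F̃₁ + D_n(μ_m u_{-1,0}) = 0, where F̃₁ = (1/6)·(μ_n(u_{-2,0} + u_{0,0}))·(μ_n u_{-1,0})² + D_m²μ_n u_{-2,0} + λ·[ 2·(μ_n u_{-1,0})·μ_m((D_m μ_n u_{-2,0})²) + 2·(D_m²μ_n u_{-2,0})·μ_m²((μ_n u_{-2,0})²) − Δx·Δt·(D_n D_m μ_m u_{-2,0})·μ_n((D_m μ_m u_{-2,0})²) ]. Then the discrete momentum Σ_{i=0}^{M−1} G̃₂(i,n) is independent of n, where G̃₂ = (1/2)·(μ_m u_{-1,0})² + λ·Δt·Δx·(μ_m u_{-1,0})·(D_m²μ_m u_{-2,0})·[ (1/4)·(D_m μ_m u_{-1,0})·(D_m μ_m u_{-2,0}) − (D_m μ_m² u_{-2,0})² ]. -/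

import Mathlib

noncomputable section

/-- Shift operator: `(Sh i j u)(m,n) = u(m+i, n+j)`. -/
def Sh (i j : ℤ) (f : ℤ × ℤ → ℝ) : ℤ × ℤ → ℝ := fun p => f (p.1 + i, p.2 + j)

/-- Forward difference in space: `D_m f = (S_m f − f)/Δx`. -/
def Dm (dx : ℝ) (f : ℤ × ℤ → ℝ) : ℤ × ℤ → ℝ := fun p => (f (p.1 + 1, p.2) - f p) / dx

/-- Forward difference in time: `D_n f = (S_n f − f)/Δt`. -/
def Dn (dt : ℝ) (f : ℤ × ℤ → ℝ) : ℤ × ℤ → ℝ := fun p => (f (p.1, p.2 + 1) - f p) / dt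

/-- Forward average in space: `μ_m f = (S_m f + f)/2`. -/
def μm (f : ℤ × ℤ → ℝ) : ℤ × ℤ → ℝ := fun p => (f (p.1 + 1, p.2) + f p) / 2

/-- Forward average in time: `μ_n f = (S_n f + f)/2`. -/
def μn (f : ℤ × ℤ → ℝ) : ℤ × ℤ → ℝ := fun p => (f (p.1, p.2 + 1) + f p) / 2

/-- Discrete flux `F̃₁` of the MC₈(λ) scheme. -/
def F1MC8 (dx dt lam : ℝ) (u : ℤ × ℤ → ℝ) : ℤ × ℤ → ℝ :=
  (1/6 : ℝ) • (μn (Sh (-2) 0 u + u) * (μn (Sh (-1) 0 u)) ^ 2)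
    + Dm dx (Dm dx (μn (Sh (-2) 0 u)))
    + lam • ((2 : ℝ) • (μn (Sh (-1) 0 u) * μm ((Dm dx (μn (Sh (-2) 0 u))) ^ 2))
        + (2 : ℝ) • (Dm dx (Dm dx (μn (Sh (-2) 0 u))) * μm (μm ((μn (Sh (-2) 0 u)) ^ 2)))
        - (dx * dt) • (Dn dt (Dm dx (μm (Sh (-2) 0 u))) * μn ((Dm dx (μm (Sh (-2) 0 u))) ^ 2)))

/-- Discrete momentum density `G̃₂` of the MC₈(λ) scheme. -/
def G2MC8 (dx dt lam : ℝ) (u : ℤ × ℤ → ℝ) : ℤ × ℤ → ℝ :=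
  (1/2 : ℝ) • (μm (Sh (-1) 0 u)) ^ 2
    + (lam * dt * dx) • (μm (Sh (-1) 0 u) * Dm dx (Dm dx (μm (Sh (-2) 0 u)))
        * ((1/4 : ℝ) • (Dm dx (μm (Sh (-1) 0 u)) * Dm dx (μm (Sh (-2) 0 u)))
            - (Dm dx (μm (μm (Sh (-2) 0 u)))) ^ 2))

set_option maxHeartbeats 1000000 in
def Hflux (dx dt lam : ℝ) (u : ℤ × ℤ → ℝ) : ℤ × ℤ → ℝ := fun p =>
    ((144 : ℝ) * dt * u (p.1 - 1, p.2) * u (p.1 - 1, p.2 + 1)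
      + (-3 : ℝ) * dt * dx ^ 2 * u (p.1 - 1, p.2) * u (p.1 - 1, p.2 + 1) ^ 2 * u (p.1, p.2)
      + (18 : ℝ) * dt * lam * u (p.1 - 1, p.2) * u (p.1 - 1, p.2 + 1) ^ 2 * u (p.1, p.2)
      + (-3 : ℝ) * dt * dx ^ 2 * u (p.1 - 1, p.2) * u (p.1 - 1, p.2 + 1) ^ 2 * u (p.1, p.2 + 1)
      + (18 : ℝ) * dt * lam * u (p.1 - 1, p.2) * u (p.1 - 1, p.2 + 1) ^ 2 * u (p.1, p.2 + 1)
      + (12 : ℝ) * dt * lam * u (p.1 - 1, p.2) * u (p.1 - 1, p.2 + 1) ^ 3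
      + (-24 : ℝ) * dt * u (p.1 - 1, p.2) * u (p.1, p.2)
      + (-12 : ℝ) * dt * lam * u (p.1 - 1, p.2) * u (p.1, p.2) * u (p.1, p.2 + 1) ^ 2
      + (-6 : ℝ) * dt * lam * u (p.1 - 1, p.2) * u (p.1, p.2) ^ 2 * u (p.1, p.2 + 1)
      + (-3 : ℝ) * dt * lam * u (p.1 - 1, p.2) * u (p.1, p.2) ^ 3
      + (-24 : ℝ) * dt * u (p.1 - 1, p.2) * u (p.1, p.2 + 1)
      + (-3 : ℝ) * dt * dx ^ 2 * u (p.1 - 1, p.2) ^ 2 * u (p.1 - 1, p.2 + 1) * u (p.1, p.2)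
      + (18 : ℝ) * dt * lam * u (p.1 - 1, p.2) ^ 2 * u (p.1 - 1, p.2 + 1) * u (p.1, p.2)
      + (-3 : ℝ) * dt * dx ^ 2 * u (p.1 - 1, p.2) ^ 2 * u (p.1 - 1, p.2 + 1) * u (p.1, p.2 + 1)
      + (18 : ℝ) * dt * lam * u (p.1 - 1, p.2) ^ 2 * u (p.1 - 1, p.2 + 1) * u (p.1, p.2 + 1)
      + (18 : ℝ) * dt * lam * u (p.1 - 1, p.2) ^ 2 * u (p.1 - 1, p.2 + 1) ^ 2
      + (72 : ℝ) * dt * u (p.1 - 1, p.2) ^ 2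
      + (12 : ℝ) * dt * lam * u (p.1 - 1, p.2) ^ 3 * u (p.1 - 1, p.2 + 1)
      + (-1 : ℝ) * dt * dx ^ 2 * u (p.1 - 1, p.2) ^ 3 * u (p.1, p.2)
      + (6 : ℝ) * dt * lam * u (p.1 - 1, p.2) ^ 3 * u (p.1, p.2)
      + (-1 : ℝ) * dt * dx ^ 2 * u (p.1 - 1, p.2) ^ 3 * u (p.1, p.2 + 1)
      + (6 : ℝ) * dt * lam * u (p.1 - 1, p.2) ^ 3 * u (p.1, p.2 + 1)
      + (3 : ℝ) * dt * lam * u (p.1 - 1, p.2) ^ 4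
      + (-24 : ℝ) * dt * u (p.1 - 1, p.2 + 1) * u (p.1, p.2)
      + (-12 : ℝ) * dt * lam * u (p.1 - 1, p.2 + 1) * u (p.1, p.2) * u (p.1, p.2 + 1) ^ 2
      + (-6 : ℝ) * dt * lam * u (p.1 - 1, p.2 + 1) * u (p.1, p.2) ^ 2 * u (p.1, p.2 + 1)
      + (-6 : ℝ) * dt * lam * u (p.1 - 1, p.2 + 1) * u (p.1, p.2) ^ 3
      + (-24 : ℝ) * dt * u (p.1 - 1, p.2 + 1) * u (p.1, p.2 + 1)
      + (-3 : ℝ) * dt * lam * u (p.1 - 1, p.2 + 1) * u (p.1, p.2 + 1) ^ 3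
      + (72 : ℝ) * dt * u (p.1 - 1, p.2 + 1) ^ 2
      + (-1 : ℝ) * dt * dx ^ 2 * u (p.1 - 1, p.2 + 1) ^ 3 * u (p.1, p.2)
      + (6 : ℝ) * dt * lam * u (p.1 - 1, p.2 + 1) ^ 3 * u (p.1, p.2)
      + (-1 : ℝ) * dt * dx ^ 2 * u (p.1 - 1, p.2 + 1) ^ 3 * u (p.1, p.2 + 1)
      + (6 : ℝ) * dt * lam * u (p.1 - 1, p.2 + 1) ^ 3 * u (p.1, p.2 + 1)
      + (3 : ℝ) * dt * lam * u (p.1 - 1, p.2 + 1) ^ 4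
      + (-24 : ℝ) * dt * u (p.1 - 2, p.2) * u (p.1 - 1, p.2)
      + (-2 : ℝ) * dt * dx ^ 2 * u (p.1 - 2, p.2) * u (p.1 - 1, p.2) * u (p.1 - 1, p.2 + 1) * u (p.1, p.2)
      + (12 : ℝ) * dt * lam * u (p.1 - 2, p.2) * u (p.1 - 1, p.2) * u (p.1 - 1, p.2 + 1) * u (p.1, p.2)
      + (-2 : ℝ) * dt * dx ^ 2 * u (p.1 - 2, p.2) * u (p.1 - 1, p.2) * u (p.1 - 1, p.2 + 1) * u (p.1, p.2 + 1)
      + (12 : ℝ) * dt * lam * u (p.1 - 2, p.2) * u (p.1 - 1, p.2) * u (p.1 - 1, p.2 + 1) * u (p.1, p.2 + 1)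
      + (-3 : ℝ) * dt * dx ^ 2 * u (p.1 - 2, p.2) * u (p.1 - 1, p.2) * u (p.1 - 1, p.2 + 1) ^ 2
      + (18 : ℝ) * dt * lam * u (p.1 - 2, p.2) * u (p.1 - 1, p.2) * u (p.1 - 1, p.2 + 1) ^ 2
      + (-12 : ℝ) * dt * lam * u (p.1 - 2, p.2) * u (p.1 - 1, p.2) * u (p.1, p.2) * u (p.1, p.2 + 1)
      + (-3 : ℝ) * dt * lam * u (p.1 - 2, p.2) * u (p.1 - 1, p.2) * u (p.1, p.2) ^ 2
      + (-3 : ℝ) * dt * dx ^ 2 * u (p.1 - 2, p.2) * u (p.1 - 1, p.2) ^ 2 * u (p.1 - 1, p.2 + 1)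
      + (18 : ℝ) * dt * lam * u (p.1 - 2, p.2) * u (p.1 - 1, p.2) ^ 2 * u (p.1 - 1, p.2 + 1)
      + (-1 : ℝ) * dt * dx ^ 2 * u (p.1 - 2, p.2) * u (p.1 - 1, p.2) ^ 2 * u (p.1, p.2)
      + (6 : ℝ) * dt * lam * u (p.1 - 2, p.2) * u (p.1 - 1, p.2) ^ 2 * u (p.1, p.2)
      + (-1 : ℝ) * dt * dx ^ 2 * u (p.1 - 2, p.2) * u (p.1 - 1, p.2) ^ 2 * u (p.1, p.2 + 1)
      + (6 : ℝ) * dt * lam * u (p.1 - 2, p.2) * u (p.1 - 1, p.2) ^ 2 * u (p.1, p.2 + 1)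
      + (-1 : ℝ) * dt * dx ^ 2 * u (p.1 - 2, p.2) * u (p.1 - 1, p.2) ^ 3
      + (6 : ℝ) * dt * lam * u (p.1 - 2, p.2) * u (p.1 - 1, p.2) ^ 3
      + (-24 : ℝ) * dt * u (p.1 - 2, p.2) * u (p.1 - 1, p.2 + 1)
      + (-12 : ℝ) * dt * lam * u (p.1 - 2, p.2) * u (p.1 - 1, p.2 + 1) * u (p.1, p.2) * u (p.1, p.2 + 1)
      + (6 : ℝ) * dt * lam * u (p.1 - 2, p.2) * u (p.1 - 1, p.2 + 1) * u (p.1, p.2) ^ 2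
      + (-1 : ℝ) * dt * dx ^ 2 * u (p.1 - 2, p.2) * u (p.1 - 1, p.2 + 1) ^ 2 * u (p.1, p.2)
      + (6 : ℝ) * dt * lam * u (p.1 - 2, p.2) * u (p.1 - 1, p.2 + 1) ^ 2 * u (p.1, p.2)
      + (-1 : ℝ) * dt * dx ^ 2 * u (p.1 - 2, p.2) * u (p.1 - 1, p.2 + 1) ^ 2 * u (p.1, p.2 + 1)
      + (6 : ℝ) * dt * lam * u (p.1 - 2, p.2) * u (p.1 - 1, p.2 + 1) ^ 2 * u (p.1, p.2 + 1)
      + (-1 : ℝ) * dt * dx ^ 2 * u (p.1 - 2, p.2) * u (p.1 - 1, p.2 + 1) ^ 3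
      + (6 : ℝ) * dt * lam * u (p.1 - 2, p.2) * u (p.1 - 1, p.2 + 1) ^ 3
      + (-12 : ℝ) * dt * lam * u (p.1 - 2, p.2) * u (p.1 - 2, p.2 + 1) * u (p.1 - 1, p.2) * u (p.1, p.2 + 1)
      + (-12 : ℝ) * dt * lam * u (p.1 - 2, p.2) * u (p.1 - 2, p.2 + 1) * u (p.1 - 1, p.2 + 1) * u (p.1, p.2 + 1)
      + (-12 : ℝ) * dt * lam * u (p.1 - 2, p.2) * u (p.1 - 2, p.2 + 1) * u (p.1, p.2) * u (p.1, p.2 + 1)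
      + (-12 : ℝ) * dt * lam * u (p.1 - 2, p.2) * u (p.1 - 2, p.2 + 1) * u (p.1, p.2 + 1) ^ 2
      + (-6 : ℝ) * dt * lam * u (p.1 - 2, p.2) * u (p.1 - 2, p.2 + 1) ^ 2 * u (p.1 - 1, p.2)
      + (-6 : ℝ) * dt * lam * u (p.1 - 2, p.2) * u (p.1 - 2, p.2 + 1) ^ 2 * u (p.1 - 1, p.2 + 1)
      + (-6 : ℝ) * dt * lam * u (p.1 - 2, p.2) * u (p.1 - 2, p.2 + 1) ^ 2 * u (p.1, p.2)
      + (-6 : ℝ) * dt * lam * u (p.1 - 2, p.2) * u (p.1 - 2, p.2 + 1) ^ 2 * u (p.1, p.2 + 1)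
      + (-24 : ℝ) * dt * u (p.1 - 2, p.2) * u (p.1, p.2)
      + (-12 : ℝ) * dt * lam * u (p.1 - 2, p.2) * u (p.1, p.2) * u (p.1, p.2 + 1) ^ 2
      + (-6 : ℝ) * dt * lam * u (p.1 - 2, p.2) * u (p.1, p.2) ^ 2 * u (p.1, p.2 + 1)
      + (-3 : ℝ) * dt * lam * u (p.1 - 2, p.2) * u (p.1, p.2) ^ 3
      + (-24 : ℝ) * dt * u (p.1 - 2, p.2) * u (p.1, p.2 + 1)
      + (-3 : ℝ) * dt * lam * u (p.1 - 2, p.2) ^ 2 * u (p.1 - 1, p.2) * u (p.1, p.2)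
      + (-12 : ℝ) * dt * lam * u (p.1 - 2, p.2) ^ 2 * u (p.1 - 1, p.2 + 1) * u (p.1, p.2)
      + (-12 : ℝ) * dt * lam * u (p.1 - 2, p.2) ^ 2 * u (p.1 - 2, p.2 + 1) * u (p.1 - 1, p.2)
      + (-12 : ℝ) * dt * lam * u (p.1 - 2, p.2) ^ 2 * u (p.1 - 2, p.2 + 1) * u (p.1 - 1, p.2 + 1)
      + (-12 : ℝ) * dt * lam * u (p.1 - 2, p.2) ^ 2 * u (p.1 - 2, p.2 + 1) * u (p.1, p.2)
      + (-12 : ℝ) * dt * lam * u (p.1 - 2, p.2) ^ 2 * u (p.1 - 2, p.2 + 1) * u (p.1, p.2 + 1)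
      + (-12 : ℝ) * dt * lam * u (p.1 - 2, p.2) ^ 2 * u (p.1, p.2) * u (p.1, p.2 + 1)
      + (-3 : ℝ) * dt * lam * u (p.1 - 2, p.2) ^ 2 * u (p.1, p.2) ^ 2
      + (-3 : ℝ) * dt * lam * u (p.1 - 2, p.2) ^ 3 * u (p.1 - 1, p.2)
      + (-3 : ℝ) * dt * lam * u (p.1 - 2, p.2) ^ 3 * u (p.1, p.2)
      + (-24 : ℝ) * dt * u (p.1 - 2, p.2 + 1) * u (p.1 - 1, p.2)
      + (-2 : ℝ) * dt * dx ^ 2 * u (p.1 - 2, p.2 + 1) * u (p.1 - 1, p.2) * u (p.1 - 1, p.2 + 1) * u (p.1, p.2)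
      + (12 : ℝ) * dt * lam * u (p.1 - 2, p.2 + 1) * u (p.1 - 1, p.2) * u (p.1 - 1, p.2 + 1) * u (p.1, p.2)
      + (-2 : ℝ) * dt * dx ^ 2 * u (p.1 - 2, p.2 + 1) * u (p.1 - 1, p.2) * u (p.1 - 1, p.2 + 1) * u (p.1, p.2 + 1)
      + (12 : ℝ) * dt * lam * u (p.1 - 2, p.2 + 1) * u (p.1 - 1, p.2) * u (p.1 - 1, p.2 + 1) * u (p.1, p.2 + 1)
      + (-3 : ℝ) * dt * dx ^ 2 * u (p.1 - 2, p.2 + 1) * u (p.1 - 1, p.2) * u (p.1 - 1, p.2 + 1) ^ 2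
      + (18 : ℝ) * dt * lam * u (p.1 - 2, p.2 + 1) * u (p.1 - 1, p.2) * u (p.1 - 1, p.2 + 1) ^ 2
      + (-6 : ℝ) * dt * lam * u (p.1 - 2, p.2 + 1) * u (p.1 - 1, p.2) * u (p.1, p.2) ^ 2
      + (-12 : ℝ) * dt * lam * u (p.1 - 2, p.2 + 1) * u (p.1 - 1, p.2) * u (p.1, p.2 + 1) ^ 2
      + (-3 : ℝ) * dt * dx ^ 2 * u (p.1 - 2, p.2 + 1) * u (p.1 - 1, p.2) ^ 2 * u (p.1 - 1, p.2 + 1)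
      + (18 : ℝ) * dt * lam * u (p.1 - 2, p.2 + 1) * u (p.1 - 1, p.2) ^ 2 * u (p.1 - 1, p.2 + 1)
      + (-1 : ℝ) * dt * dx ^ 2 * u (p.1 - 2, p.2 + 1) * u (p.1 - 1, p.2) ^ 2 * u (p.1, p.2)
      + (6 : ℝ) * dt * lam * u (p.1 - 2, p.2 + 1) * u (p.1 - 1, p.2) ^ 2 * u (p.1, p.2)
      + (-1 : ℝ) * dt * dx ^ 2 * u (p.1 - 2, p.2 + 1) * u (p.1 - 1, p.2) ^ 2 * u (p.1, p.2 + 1)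
      + (6 : ℝ) * dt * lam * u (p.1 - 2, p.2 + 1) * u (p.1 - 1, p.2) ^ 2 * u (p.1, p.2 + 1)
      + (-1 : ℝ) * dt * dx ^ 2 * u (p.1 - 2, p.2 + 1) * u (p.1 - 1, p.2) ^ 3
      + (6 : ℝ) * dt * lam * u (p.1 - 2, p.2 + 1) * u (p.1 - 1, p.2) ^ 3
      + (-24 : ℝ) * dt * u (p.1 - 2, p.2 + 1) * u (p.1 - 1, p.2 + 1)
      + (-6 : ℝ) * dt * lam * u (p.1 - 2, p.2 + 1) * u (p.1 - 1, p.2 + 1) * u (p.1, p.2) ^ 2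
      + (-3 : ℝ) * dt * lam * u (p.1 - 2, p.2 + 1) * u (p.1 - 1, p.2 + 1) * u (p.1, p.2 + 1) ^ 2
      + (-1 : ℝ) * dt * dx ^ 2 * u (p.1 - 2, p.2 + 1) * u (p.1 - 1, p.2 + 1) ^ 2 * u (p.1, p.2)
      + (6 : ℝ) * dt * lam * u (p.1 - 2, p.2 + 1) * u (p.1 - 1, p.2 + 1) ^ 2 * u (p.1, p.2)
      + (-1 : ℝ) * dt * dx ^ 2 * u (p.1 - 2, p.2 + 1) * u (p.1 - 1, p.2 + 1) ^ 2 * u (p.1, p.2 + 1)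
      + (6 : ℝ) * dt * lam * u (p.1 - 2, p.2 + 1) * u (p.1 - 1, p.2 + 1) ^ 2 * u (p.1, p.2 + 1)
      + (-1 : ℝ) * dt * dx ^ 2 * u (p.1 - 2, p.2 + 1) * u (p.1 - 1, p.2 + 1) ^ 3
      + (6 : ℝ) * dt * lam * u (p.1 - 2, p.2 + 1) * u (p.1 - 1, p.2 + 1) ^ 3
      + (-24 : ℝ) * dt * u (p.1 - 2, p.2 + 1) * u (p.1, p.2)
      + (-12 : ℝ) * dt * lam * u (p.1 - 2, p.2 + 1) * u (p.1, p.2) * u (p.1, p.2 + 1) ^ 2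
      + (-6 : ℝ) * dt * lam * u (p.1 - 2, p.2 + 1) * u (p.1, p.2) ^ 2 * u (p.1, p.2 + 1)
      + (-6 : ℝ) * dt * lam * u (p.1 - 2, p.2 + 1) * u (p.1, p.2) ^ 3
      + (-24 : ℝ) * dt * u (p.1 - 2, p.2 + 1) * u (p.1, p.2 + 1)
      + (-3 : ℝ) * dt * lam * u (p.1 - 2, p.2 + 1) * u (p.1, p.2 + 1) ^ 3
      + (-6 : ℝ) * dt * lam * u (p.1 - 2, p.2 + 1) ^ 2 * u (p.1 - 1, p.2) * u (p.1, p.2)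
      + (6 : ℝ) * dt * lam * u (p.1 - 2, p.2 + 1) ^ 2 * u (p.1 - 1, p.2) * u (p.1, p.2 + 1)
      + (-6 : ℝ) * dt * lam * u (p.1 - 2, p.2 + 1) ^ 2 * u (p.1 - 1, p.2 + 1) * u (p.1, p.2)
      + (-3 : ℝ) * dt * lam * u (p.1 - 2, p.2 + 1) ^ 2 * u (p.1 - 1, p.2 + 1) * u (p.1, p.2 + 1)
      + (-6 : ℝ) * dt * lam * u (p.1 - 2, p.2 + 1) ^ 2 * u (p.1, p.2) ^ 2
      + (-3 : ℝ) * dt * lam * u (p.1 - 2, p.2 + 1) ^ 2 * u (p.1, p.2 + 1) ^ 2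
      + (-6 : ℝ) * dt * lam * u (p.1 - 2, p.2 + 1) ^ 3 * u (p.1 - 1, p.2)
      + (-3 : ℝ) * dt * lam * u (p.1 - 2, p.2 + 1) ^ 3 * u (p.1 - 1, p.2 + 1)
      + (-6 : ℝ) * dt * lam * u (p.1 - 2, p.2 + 1) ^ 3 * u (p.1, p.2)
      + (-3 : ℝ) * dt * lam * u (p.1 - 2, p.2 + 1) ^ 3 * u (p.1, p.2 + 1))
    / (192 * dx ^ 3)

set_option maxHeartbeats 4000000 in
lemma Hkey (dx dt lam : ℝ) (hdx : dx ≠ 0) (hdt : dt ≠ 0) (u : ℤ × ℤ → ℝ) (m n : ℤ) :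
    G2MC8 dx dt lam u (m, n + 1) - G2MC8 dx dt lam u (m, n)
      = (Hflux dx dt lam u (m + 1, n) - Hflux dx dt lam u (m, n))
        + dt * (μn (μm (Sh (-1) 0 u)) (m, n))
            * ((Dm dx (F1MC8 dx dt lam u) + Dn dt (μm (Sh (-1) 0 u))) (m, n)) := by
  simp only [G2MC8, Hflux, F1MC8, Dm, Dn, μm, μn, Sh, Pi.add_apply, Pi.mul_apply,
    Pi.sub_apply, Pi.smul_apply, Pi.pow_apply, smul_eq_mul]
  simp only [show m + 1 + -1 = m by ring, show m + -1 = m - 1 by ring, show m + -2 = m - 2 by ring,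
    show m + 1 + -2 = m - 1 by ring, show m + 1 + 1 + -1 = m + 1 by ring, show m + 1 + 1 + -2 = m by ring,
    show m + 1 + 1 + 1 + -2 = m + 1 by ring, show m + 1 - 1 = m by ring, show m + 1 - 2 = m - 1 by ring,
    add_zero]
  field_simp
  ring

/-- Spatially periodic solutions of the MC₈(λ) scheme conserve the discrete momentum. -/
theorem MC8_discrete_momentum_invariant (dx dt lam : ℝ) (hdx : 0 < dx) (hdt : 0 < dt)
    (M : ℕ) (hM : 1 ≤ M) (u : ℤ × ℤ → ℝ)
    (hper : ∀ m n : ℤ, u (m + (M : ℤ), n) = u (m, n))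
    (hscheme : ∀ p : ℤ × ℤ,
      (Dm dx (F1MC8 dx dt lam u) + Dn dt (μm (Sh (-1) 0 u))) p = 0) :
    ∀ n₁ n₂ : ℤ,
      (∑ i ∈ Finset.range M, G2MC8 dx dt lam u ((i : ℤ), n₁))
        = ∑ i ∈ Finset.range M, G2MC8 dx dt lam u ((i : ℤ), n₂) := by
  have hdx' : dx ≠ 0 := ne_of_gt hdx
  have hdt' : dt ≠ 0 := ne_of_gt hdt
  -- periodicity of the flux
  have Hper : ∀ m n : ℤ, Hflux dx dt lam u (m + (M : ℤ), n) = Hflux dx dt lam u (m, n) := by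
    intro m n
    have e0 : ∀ x : ℤ, u (m + (M : ℤ), x) = u (m, x) := fun x => hper m x
    have e1 : ∀ x : ℤ, u (m + (M : ℤ) - 1, x) = u (m - 1, x) := fun x => by
      rw [show m + (M : ℤ) - 1 = (m - 1) + (M : ℤ) by ring, hper]
    have e2 : ∀ x : ℤ, u (m + (M : ℤ) - 2, x) = u (m - 2, x) := fun x => by
      rw [show m + (M : ℤ) - 2 = (m - 2) + (M : ℤ) by ring, hper]
    simp only [Hflux, e0, e1, e2]
  -- one time step
  have step : ∀ n : ℤ,
      (∑ i ∈ Finset.range M, G2MC8 dx dt lam u ((i : ℤ), n + 1))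
        = ∑ i ∈ Finset.range M, G2MC8 dx dt lam u ((i : ℤ), n) := by
    intro n
    have hdiff : ∀ i : ℤ,
        G2MC8 dx dt lam u (i, n + 1)
          = G2MC8 dx dt lam u (i, n)
            + (Hflux dx dt lam u (i + 1, n) - Hflux dx dt lam u (i, n)) := by
      intro i
      have h := Hkey dx dt lam hdx' hdt' u i n
      rw [hscheme (i, n)] at h
      linarith [h]
    calc (∑ i ∈ Finset.range M, G2MC8 dx dt lam u ((i : ℤ), n + 1))
        = ∑ i ∈ Finset.range M, (G2MC8 dx dt lam u ((i : ℤ), n)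
            + (Hflux dx dt lam u ((i : ℤ) + 1, n) - Hflux dx dt lam u ((i : ℤ), n))) := by
          exact Finset.sum_congr rfl fun i _ => hdiff i
      _ = (∑ i ∈ Finset.range M, G2MC8 dx dt lam u ((i : ℤ), n))
            + ∑ i ∈ Finset.range M,
              (Hflux dx dt lam u ((i : ℤ) + 1, n) - Hflux dx dt lam u ((i : ℤ), n)) := by
          rw [Finset.sum_add_distrib]
      _ = ∑ i ∈ Finset.range M, G2MC8 dx dt lam u ((i : ℤ), n) := by
          have htel : (∑ i ∈ Finset.range M,
              (Hflux dx dt lam u ((i : ℤ) + 1, n) - Hflux dx dt lam u ((i : ℤ), n)))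
              = Hflux dx dt lam u ((M : ℤ), n) - Hflux dx dt lam u ((0 : ℤ), n) := by
            have := Finset.sum_range_sub (fun i : ℕ => Hflux dx dt lam u ((i : ℤ), n)) M
            simpa [Nat.cast_add, Nat.cast_one] using this
          rw [htel]
          have := Hper 0 n
          simp only [zero_add] at this
          rw [this]
          ring
  -- constancy in n
  have const : ∀ n : ℤ,
      (∑ i ∈ Finset.range M, G2MC8 dx dt lam u ((i : ℤ), n))
        = ∑ i ∈ Finset.range M, G2MC8 dx dt lam u ((i : ℤ), 0) := by
    intro n
    induction n using Int.induction_on with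
    | zero => rfl
    | succ k ih => rw [step k]; exact ih
    | pred k ih => rw [← ih, ← step (-k - 1)]; norm_num
  intro n₁ n₂
  rw [const n₁, const n₂]
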